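/- arXiv:1208.3398 — 5 statements merged into one kernel-verified Lean document; each statement's English description precedes it below -/
import Mathlib

section
/- Suppose x(k) ∈ ℝ^n evolves so that at each step at most one coordinate i is updated, either unchanged, or x_i(k+1) = (1-T_k)x_i(k) + T_k x_j(k) with T_k ∈ [0,1], or x_i(k+1) = (1+S_k)x_i(k) - S_k x_j(k) with S_k ≥ 0, for some j. Let 𝓗(k) = max_i x_i(k) - min_i x_i(k). Then 𝓗(k+1) ≤ (1 + 2S_k)·𝓗(k) for every k. -/
/-- Per-step upper bound on the agreement measure for the combined
attraction/neglect/repulsion gossip model: `𝓗(k+1) ≤ (1 + 2 S_k) 𝓗(k)`. -/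
theorem stmt_8 {n : ℕ} (x : ℕ → Fin n → ℝ) (T S : ℕ → ℝ) (H h : ℕ → ℝ)
    (hT : ∀ k, T k ∈ Set.Icc (0 : ℝ) 1) (hS : ∀ k, 0 ≤ S k)
    (hH : ∀ k, IsGreatest (Set.range (x k)) (H k))
    (hh : ∀ k, IsLeast (Set.range (x k)) (h k))
    (hupd : ∀ k, ∃ i : Fin n,
      (∀ i' : Fin n, i' ≠ i → x (k + 1) i' = x k i') ∧
      (x (k + 1) i = x k i ∨
        (∃ j : Fin n, x (k + 1) i = (1 - T k) * x k i + T k * x k j) ∨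
        (∃ j : Fin n, x (k + 1) i = (1 + S k) * x k i - S k * x k j))) :
    ∀ k, H (k + 1) - h (k + 1) ≤ (1 + 2 * S k) * (H k - h k) := by
  intro k
  obtain ⟨hT0, hT1⟩ := hT k
  have hSk := hS k
  obtain ⟨hHmem, hHub⟩ := hH k
  obtain ⟨hhmem, hhlb⟩ := hh k
  have hub : ∀ j : Fin n, x k j ≤ H k := fun j => hHub ⟨j, rfl⟩
  have hlb : ∀ j : Fin n, h k ≤ x k j := fun j => hhlb ⟨j, rfl⟩
  have hgap : 0 ≤ H k - h k := by
    obtain ⟨j, hj⟩ := hHmem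
    have := hlb j
    linarith [hj ▸ this]
  -- bounds on all coordinates at k+1
  have key : ∀ i' : Fin n,
      h k - S k * (H k - h k) ≤ x (k + 1) i' ∧
      x (k + 1) i' ≤ H k + S k * (H k - h k) := by
    intro i'
    obtain ⟨i, hother, hcase⟩ := hupd k
    by_cases hi : i' = i
    · subst hi
      rcases hcase with heq | ⟨j, heq⟩ | ⟨j, heq⟩
      · rw [heq]
        constructor
        · nlinarith [hlb i']
        · nlinarith [hub i']
      · rw [heq]
        constructor
        · nlinarith [hlb i', hlb j]
        · nlinarith [hub i', hub j]
      · rw [heq]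
        constructor
        · nlinarith [hlb i', hub j, hub i']
        · nlinarith [hub i', hlb j, hlb i']
    · rw [hother i' hi]
      constructor
      · nlinarith [hlb i']
      · nlinarith [hub i']
  obtain ⟨j1, hj1⟩ := (hH (k + 1)).1
  obtain ⟨j2, hj2⟩ := (hh (k + 1)).1
  have h1 : H (k + 1) ≤ H k + S k * (H k - h k) := hj1 ▸ (key j1).2
  have h2 : h k - S k * (H k - h k) ≤ h (k + 1) := hj2 ▸ (key j2).1
  linarith
end

section
/- Let {b_k} be a nonincreasing sequence with b_k ∈ [0,1] and b_0 < 1, and let n ≥ 2. Then the following are equivalent: (a) ∑_{k=0}^∞ ∏_{s=k(n-1)}^{(k+1)(n-1)-1} b_s(1-b_s) = ∞; (b) ∑_{s=0}^∞ (b_s(1-b_s))^{n-1} = ∞; (c) ∑_{s=0}^∞ b_s^{n-1} = ∞. -/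
/-!
Since `b` is nonincreasing with `b 0 < 1`, every factor satisfies
`(1 - b 0) * b s ≤ b s * (1 - b s) ≤ b s`, so (b) and (c) are comparable termwise. The block
product of (a) over `[k(n-1), (k+1)(n-1))` lies between `(1 - b 0)^(n-1) * b ((k+1)(n-1))^(n-1)`
and `b (k(n-1))^(n-1)`, so (a) is equivalent to the summability of the subsequence
`b (k(n-1))^(n-1)`, which by monotonicity is equivalent to (c), each block of `n - 1`
consecutive terms being dominated by `n - 1` times its first term.
-/

open Finset

lemma summable_iff_of_const_mul_le_of_le {ι : Type*} {f g : ι → ℝ} {c : ℝ} (hc : 0 < c)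
    (hf : ∀ i, 0 ≤ f i) (hfg : ∀ i, c * f i ≤ g i) (hgf : ∀ i, g i ≤ f i) :
    Summable g ↔ Summable f := by
  refine ⟨fun hg => ?_, fun hf' => hf'.of_nonneg_of_le (fun i => ?_) hgf⟩
  · exact (summable_mul_left_iff hc.ne').1
      (hg.of_nonneg_of_le (fun i => mul_nonneg hc.le (hf i)) hfg)
  · exact (mul_nonneg hc.le (hf i)).trans (hfg i)

lemma Antitone.summable_comp_mul_iff {f : ℕ → ℝ} (hf : Antitone f) (hf0 : ∀ n, 0 ≤ f n)
    {m : ℕ} (hm : 0 < m) : Summable (fun k => f (k * m)) ↔ Summable f := by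
  have : NeZero m := ⟨hm.ne'⟩
  refine ⟨fun h => ?_, fun h => h.comp_injective fun _ _ => Nat.eq_of_mul_eq_mul_right hm⟩
  have hblocks : Summable (fun p : ℕ × Fin m => f (p.1 * m)) := by
    refine (summable_prod_of_nonneg fun p => hf0 _).2 ⟨fun _ => .of_finite, ?_⟩
    simpa using h.mul_left (m : ℝ)
  -- `fun s => f (s / m * m)` is `hblocks` reindexed along `s ↦ (s / m, s % m)`
  exact ((Nat.divModEquiv m).summable_iff.2 hblocks).of_nonneg_of_le hf0
    fun s => hf (Nat.div_mul_le_self s m)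

section

variable {b : ℕ → ℝ}

lemma mul_one_sub_le_self (s : ℕ) : b s * (1 - b s) ≤ b s := by
  nlinarith [sq_nonneg (b s)]

lemma one_sub_apply_zero_mul_le (hb : Antitone b) (h0 : ∀ s, 0 ≤ b s) (s : ℕ) :
    (1 - b 0) * b s ≤ b s * (1 - b s) := by
  nlinarith [hb (Nat.zero_le s), h0 s]

lemma mul_one_sub_nonneg (hb : Antitone b) (h0 : ∀ s, 0 ≤ b s) (hb0 : b 0 < 1) (s : ℕ) :
    0 ≤ b s * (1 - b s) :=
  (mul_nonneg (sub_nonneg.2 hb0.le) (h0 s)).trans (one_sub_apply_zero_mul_le hb h0 s)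

lemma summable_mul_one_sub_pow_iff (hb : Antitone b) (h0 : ∀ s, 0 ≤ b s) (hb0 : b 0 < 1)
    (m : ℕ) : Summable (fun s => (b s * (1 - b s)) ^ m) ↔ Summable (fun s => b s ^ m) := by
  refine summable_iff_of_const_mul_le_of_le (pow_pos (sub_pos.2 hb0) m)
    (fun s => pow_nonneg (h0 s) m) (fun s => ?_) (fun s => ?_)
  · rw [← mul_pow]
    exact pow_le_pow_left₀ (mul_nonneg (sub_nonneg.2 hb0.le) (h0 s))
      (one_sub_apply_zero_mul_le hb h0 s) m
  · exact pow_le_pow_left₀ (mul_one_sub_nonneg hb h0 hb0 s) (mul_one_sub_le_self s) m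

lemma card_Ico_mul_succ_mul (k m : ℕ) : #(Ico (k * m) ((k + 1) * m)) = m := by
  rw [Nat.card_Ico, add_mul, one_mul, Nat.add_sub_cancel_left]

lemma prod_Ico_mul_one_sub_le (hb : Antitone b) (h0 : ∀ s, 0 ≤ b s) (hb0 : b 0 < 1)
    (k m : ℕ) : ∏ s ∈ Ico (k * m) ((k + 1) * m), b s * (1 - b s) ≤ b (k * m) ^ m := by
  calc ∏ s ∈ Ico (k * m) ((k + 1) * m), b s * (1 - b s)
      ≤ ∏ _s ∈ Ico (k * m) ((k + 1) * m), b (k * m) :=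
        prod_le_prod (fun s _ => mul_one_sub_nonneg hb h0 hb0 s)
          fun s hs => (mul_one_sub_le_self s).trans (hb (mem_Ico.1 hs).1)
    _ = b (k * m) ^ m := by rw [prod_const, card_Ico_mul_succ_mul]

lemma le_prod_Ico_mul_one_sub (hb : Antitone b) (h0 : ∀ s, 0 ≤ b s) (hb0 : b 0 < 1)
    (k m : ℕ) :
    (1 - b 0) ^ m * b ((k + 1) * m) ^ m ≤
      ∏ s ∈ Ico (k * m) ((k + 1) * m), b s * (1 - b s) := by
  calc (1 - b 0) ^ m * b ((k + 1) * m) ^ m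
      = ∏ _s ∈ Ico (k * m) ((k + 1) * m), (1 - b 0) * b ((k + 1) * m) := by
        rw [prod_const, card_Ico_mul_succ_mul, mul_pow]
    _ ≤ ∏ s ∈ Ico (k * m) ((k + 1) * m), b s * (1 - b s) :=
        prod_le_prod (fun _ _ => mul_nonneg (sub_nonneg.2 hb0.le) (h0 _)) fun s hs =>
          (mul_le_mul_of_nonneg_left (hb (mem_Ico.1 hs).2.le) (sub_nonneg.2 hb0.le)).trans
            (one_sub_apply_zero_mul_le hb h0 s)

lemma summable_prod_Ico_mul_one_sub_iff (hb : Antitone b) (h0 : ∀ s, 0 ≤ b s) (hb0 : b 0 < 1)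
    (m : ℕ) :
    Summable (fun k => ∏ s ∈ Ico (k * m) ((k + 1) * m), b s * (1 - b s)) ↔
      Summable (fun k => b (k * m) ^ m) := by
  refine ⟨fun h => ?_, fun h => h.of_nonneg_of_le
    (fun k => prod_nonneg fun s _ => mul_one_sub_nonneg hb h0 hb0 s)
    (prod_Ico_mul_one_sub_le hb h0 hb0 · m)⟩
  have hshift : Summable (fun k => (1 - b 0) ^ m * b ((k + 1) * m) ^ m) :=
    h.of_nonneg_of_le (fun k => mul_nonneg (pow_nonneg (sub_nonneg.2 hb0.le) m)
      (pow_nonneg (h0 _) m)) (le_prod_Ico_mul_one_sub hb h0 hb0 · m)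
  exact (summable_nat_add_iff 1).1
    ((summable_mul_left_iff (pow_pos (sub_pos.2 hb0) m).ne').1 hshift)

end

/-- Lemma 2(i): for a nonincreasing sequence `b_k ∈ [0,1]` with `b_0 < 1` and `n ≥ 2`,
the divergence of `∑_k ∏_{s=k(n-1)}^{(k+1)(n-1)-1} b_s (1-b_s)`, of
`∑_s (b_s (1-b_s))^{n-1}`, and of `∑_s b_s^{n-1}` are all equivalent. -/
theorem stmt_11 (n : ℕ) (hn : 2 ≤ n) (b : ℕ → ℝ) (hmono : Antitone b)
    (hb : ∀ k, b k ∈ Set.Icc (0 : ℝ) 1) (hb0 : b 0 < 1) :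
    (¬ Summable (fun k => ∏ s ∈ Finset.Ico (k * (n - 1)) ((k + 1) * (n - 1)),
          b s * (1 - b s)) ↔
        ¬ Summable fun s => (b s * (1 - b s)) ^ (n - 1)) ∧
    (¬ Summable (fun s => (b s * (1 - b s)) ^ (n - 1)) ↔
        ¬ Summable fun s => b s ^ (n - 1)) := by
  have h0 : ∀ s, 0 ≤ b s := fun s => (hb s).1
  have hpow : Antitone fun s => b s ^ (n - 1) := fun _ _ hst =>
    pow_le_pow_left₀ (h0 _) (hmono hst) _
  rw [summable_prod_Ico_mul_one_sub_iff hmono h0 hb0, summable_mul_one_sub_pow_iff hmono h0 hb0,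
    hpow.summable_comp_mul_iff (fun s => pow_nonneg (h0 s) _) (by omega)]
  exact ⟨Iff.rfl, Iff.rfl⟩
end

section
/- Let {b_k} be a nondecreasing sequence with b_k ∈ [0,1] and b_0 > 0 (and b_k bounded away from 1 is not assumed), and let n ≥ 2. Then ∑_{k=0}^∞ ∏_{s=k(n-1)}^{(k+1)(n-1)-1} b_s(1-b_s) = ∞ if and only if ∑_{s=0}^∞ (1-b_s)^{n-1} = ∞. -/
/-!
With `m = n - 1` and `b` nondecreasing, every factor of the `k`-th block satisfies
`b 0 * (1 - b ((k+1)m)) ≤ b s * (1 - b s) ≤ 1 - b (km)`, so the `k`-th block product lies between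
`b 0 ^ m * (1 - b ((k+1)m)) ^ m` and `(1 - b (km)) ^ m`. Since `b 0 > 0`, the block series
therefore converges iff `∑ₖ (1 - b (km)) ^ m` does, and as `s ↦ (1 - b s) ^ m` is antitone this
subsampled series converges iff the full one does.
-/

open Finset

lemma Antitone.summable_comp_mul_right_iff {f : ℕ → ℝ} (hf : Antitone f) {m : ℕ} (hm : m ≠ 0) :
    Summable (fun k => f (k * m)) ↔ Summable f := by
  have : NeZero m := ⟨hm⟩
  have h := summable_indicator_mod_iff_summable m 0 f
  simp only [Nat.cast_zero, add_zero] at h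
  simp_rw [mul_comm _ m, ← h, summable_indicator_mod_iff hf]

lemma summable_iff_of_le_of_le_succ {u v : ℕ → ℝ} {c C : ℝ} (hc : 0 < c) (hu : ∀ k, 0 ≤ u k)
    (hvu : ∀ k, v k ≤ C * u k) (huv : ∀ k, c * u (k + 1) ≤ v k) :
    Summable v ↔ Summable u := by
  constructor
  · intro hv
    refine (summable_nat_add_iff 1).mp (Summable.of_nonneg_of_le (fun k => hu _) (fun k => ?_)
      (hv.mul_left c⁻¹))
    rw [le_inv_mul_iff₀ hc]
    exact huv k
  · intro hu'
    exact Summable.of_nonneg_of_le (fun k => (mul_nonneg hc.le (hu _)).trans (huv k)) hvu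
      (hu'.mul_left C)

lemma prod_Ico_mul_one_sub_le_s12 {b : ℕ → ℝ} (hmono : Monotone b)
    (hb : ∀ s, b s ∈ Set.Icc (0 : ℝ) 1) (i j : ℕ) :
    ∏ s ∈ Ico i j, b s * (1 - b s) ≤ (1 - b i) ^ (j - i) := by
  rw [← Nat.card_Ico, ← prod_const]
  refine prod_le_prod (fun s _ => mul_nonneg (hb s).1 (sub_nonneg.2 (hb s).2)) fun s hs => ?_
  exact (mul_le_of_le_one_left (sub_nonneg.2 (hb s).2) (hb s).2).trans
    (sub_le_sub_left (hmono (mem_Ico.1 hs).1) 1)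

lemma pow_le_prod_Ico_mul_one_sub {b : ℕ → ℝ} (hmono : Monotone b)
    (hb : ∀ s, b s ∈ Set.Icc (0 : ℝ) 1) (i j : ℕ) :
    (b i * (1 - b j)) ^ (j - i) ≤ ∏ s ∈ Ico i j, b s * (1 - b s) := by
  rw [← Nat.card_Ico, ← prod_const]
  refine prod_le_prod (fun _ _ => mul_nonneg (hb i).1 (sub_nonneg.2 (hb j).2)) fun s hs => ?_
  have hs := mem_Ico.1 hs
  exact mul_le_mul (hmono hs.1) (by linarith [hmono hs.2.le]) (sub_nonneg.2 (hb j).2) (hb s).1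

/-- Lemma 2(ii): for a nondecreasing sequence `b_k ∈ [0,1]` with `b_0 > 0` and `n ≥ 2`,
`∑_k ∏_{s=k(n-1)}^{(k+1)(n-1)-1} b_s (1-b_s) = ∞` iff `∑_s (1-b_s)^{n-1} = ∞`. -/
theorem stmt_12 (n : ℕ) (hn : 2 ≤ n) (b : ℕ → ℝ) (hmono : Monotone b)
    (hb : ∀ k, b k ∈ Set.Icc (0 : ℝ) 1) (hb0 : 0 < b 0) :
    ¬ Summable (fun k => ∏ s ∈ Finset.Ico (k * (n - 1)) ((k + 1) * (n - 1)),
        b s * (1 - b s)) ↔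
      ¬ Summable fun s => (1 - b s) ^ (n - 1) := by
  set m := n - 1
  have hblock : ∀ k, (k + 1) * m - k * m = m := fun k => by
    rw [add_one_mul, Nat.add_sub_cancel_left]
  have hgap : ∀ s, 0 ≤ 1 - b s := fun s => sub_nonneg.2 (hb s).2
  have hanti : Antitone fun s => (1 - b s) ^ m := fun s t hst =>
    pow_le_pow_left₀ (hgap t) (by linarith [hmono hst]) m
  rw [not_iff_not, ← hanti.summable_comp_mul_right_iff (by omega : n - 1 ≠ 0)]
  refine summable_iff_of_le_of_le_succ (C := 1) (pow_pos hb0 m) (fun k => pow_nonneg (hgap _) m)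
    (fun k => ?_) (fun k => ?_)
  · simpa only [one_mul, hblock] using prod_Ico_mul_one_sub_le_s12 hmono hb (k * m) ((k + 1) * m)
  · calc b 0 ^ m * (1 - b ((k + 1) * m)) ^ m ≤ (b (k * m) * (1 - b ((k + 1) * m))) ^ m := by
          rw [mul_pow]
          gcongr
          · exact pow_nonneg (hgap _) m
          · exact hmono (Nat.zero_le _)
      _ ≤ _ := by
          simpa only [hblock] using pow_le_prod_Ico_mul_one_sub hmono hb (k * m) ((k + 1) * m)
end

section
/- Let A ∈ ℝ^{n×n} be a stochastic matrix with zero diagonal whose induced graph is weakly connected (i.e., the graph of A + A^T is connected), and let L = D - (A+A^T) be its symmetrized Laplacian. Let T ∈ [0,1], S ≥ 0, α, γ ≥ 0, and set E = I - (2/n)(T(1-T)α - S(1+S)γ)·L. If T(1-T)α > S(1+S)γ, then every eigenvalue of E restricted to the orthogonal complement of the all-ones vector 𝟙 lies in [0, 1 - (2/n)(T(1-T)α - S(1+S)γ)λ₂*], where λ₂* > 0 is the second smallest eigenvalue of L; in particular these eigenvalues are strictly less than 1. -/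
/-!
The weighted Laplacian `L` of `w = A + Aᵀ` satisfies `2 vᵀ L v = ∑ᵢⱼ wᵢⱼ (vᵢ - vⱼ)²`, so on a
connected graph its kernel consists of the constant vectors, and its eigenvalues on `𝟙^⊥` are
positive. Gershgorin's theorem bounds every eigenvalue of `L` by twice a diagonal entry, hence by
`2n` for a stochastic `A`. An eigenvalue of `E = I - cL` on `𝟙^⊥` has the form `1 - cλ` with `λ`
an eigenvalue of `L` on `𝟙^⊥`, and `c · 2n = 4 (T(1-T)α - S(1+S)γ) ≤ 1` since `T(1-T) ≤ 1/4`.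
-/

/-- The symmetrized Laplacian `L = D - (A + A.transpose)` of a stochastic matrix `A` with zero
diagonal. -/
noncomputable def symLap {n : ℕ} (A : Matrix (Fin n) (Fin n) ℝ) :
    Matrix (Fin n) (Fin n) ℝ :=
  Matrix.diagonal (fun i => ∑ j, (A i j + A j i)) - (A + A.transpose)

open Finset Matrix

/-- The eigenvalues of `M` on `𝟙^⊥`; for `M = symLap A` its infimum is the paper's `λ₂*`. -/
def eigenvaluesOnSumZero {ι : Type*} [Fintype ι] (M : Matrix ι ι ℝ) : Set ℝ :=
  {μ | ∃ v : ι → ℝ, v ≠ 0 ∧ ∑ i, v i = 0 ∧ M *ᵥ v = μ • v}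

section eigenvaluesOnSumZero

variable {ι : Type*} [Fintype ι] {M : Matrix ι ι ℝ}

theorem eigenvaluesOnSumZero_finite (M : Matrix ι ι ℝ) : (eigenvaluesOnSumZero M).Finite := by
  refine (Module.End.finite_hasEigenvalue M.mulVecLin).subset ?_
  rintro μ ⟨v, hv, -, hMv⟩
  exact Module.End.hasEigenvalue_of_hasEigenvector
    ⟨Module.End.mem_eigenspace_iff.mpr (by simpa using hMv), hv⟩

/-- An eigenvector for a nonzero eigenvalue lies in `𝟙^⊥` because `𝟙ᵀ M = 0`. -/
theorem eigenvaluesOnSumZero_nonempty (hM : M.IsHermitian) (hM0 : M ≠ 0)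
    (hsum : ∀ v, ∑ i, (M *ᵥ v) i = 0) : (eigenvaluesOnSumZero M).Nonempty := by
  obtain ⟨v, t, ht, hv, hMv⟩ := hM.exists_eigenvector_of_ne_zero hM0
  refine ⟨t, v, hv, ?_, hMv⟩
  have : t * ∑ i, v i = 0 := by
    simpa [hMv, mul_sum] using hsum v
  exact (mul_eq_zero.mp this).resolve_left ht

theorem one_sub_smul_mulVec_eq_smul_iff [DecidableEq ι] {c μ : ℝ} (hc : c ≠ 0) (v : ι → ℝ) :
    (1 - c • M) *ᵥ v = μ • v ↔ M *ᵥ v = ((1 - μ) / c) • v := by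
  rw [sub_mulVec, one_mulVec, smul_mulVec, sub_eq_iff_eq_add', ← sub_eq_iff_eq_add,
    show v - μ • v = (1 - μ) • v by rw [sub_smul, one_smul], div_eq_inv_mul, mul_smul,
    eq_inv_smul_iff₀ hc, eq_comm]

theorem mem_eigenvaluesOnSumZero_one_sub_smul_iff [DecidableEq ι] {c μ : ℝ} (hc : c ≠ 0) :
    μ ∈ eigenvaluesOnSumZero (1 - c • M) ↔ (1 - μ) / c ∈ eigenvaluesOnSumZero M := by
  simp only [eigenvaluesOnSumZero, Set.mem_ofPred_eq, one_sub_smul_mulVec_eq_smul_iff hc]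

end eigenvaluesOnSumZero

section symLap

variable {n : ℕ} (A : Matrix (Fin n) (Fin n) ℝ)

theorem symLap_apply (i j : Fin n) :
    symLap A i j = (if i = j then ∑ k, (A i k + A k i) else 0) - (A i j + A j i) := by
  simp [symLap, diagonal_apply]

theorem symLap_apply_self (i : Fin n) :
    symLap A i i = ∑ k ∈ univ.erase i, (A i k + A k i) := by
  rw [symLap_apply, if_pos rfl, sum_erase_eq_sub (mem_univ i)]

theorem symLap_apply_of_ne {i j : Fin n} (h : i ≠ j) : symLap A i j = -(A i j + A j i) := by
  rw [symLap_apply, if_neg h, zero_sub]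

theorem symLap_mulVec_apply (v : Fin n → ℝ) (i : Fin n) :
    (symLap A *ᵥ v) i = ∑ j, (A i j + A j i) * (v i - v j) := by
  simp only [mulVec, dotProduct, symLap_apply, sub_mul, ite_mul, zero_mul, sum_sub_distrib,
    sum_ite_eq, mem_univ, if_true, mul_sub, sum_mul]

theorem symLap_isHermitian : (symLap A).IsHermitian := by
  ext i j
  rcases eq_or_ne i j with rfl | h
  · simp
  · simp [symLap_apply_of_ne _ h, symLap_apply_of_ne _ h.symm, add_comm]

theorem sum_symLap_mulVec (v : Fin n → ℝ) : ∑ i, (symLap A *ᵥ v) i = 0 := by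
  have hswap : ∑ i, (symLap A *ᵥ v) i = -∑ i, (symLap A *ᵥ v) i := by
    simp only [symLap_mulVec_apply]
    conv_lhs => rw [sum_comm]
    rw [← sum_neg_distrib]
    refine sum_congr rfl fun i _ => ?_
    rw [← sum_neg_distrib]
    exact sum_congr rfl fun j _ => by ring
  linarith

theorem two_mul_dotProduct_symLap_mulVec (v : Fin n → ℝ) :
    2 * (v ⬝ᵥ symLap A *ᵥ v) = ∑ i, ∑ j, (A i j + A j i) * (v i - v j) ^ 2 := by
  have hdef : v ⬝ᵥ symLap A *ᵥ v = ∑ i, ∑ j, (A i j + A j i) * (v i * (v i - v j)) := by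
    simp only [dotProduct, symLap_mulVec_apply, mul_sum]
    exact sum_congr rfl fun i _ => sum_congr rfl fun j _ => by ring
  have hswap : v ⬝ᵥ symLap A *ᵥ v = ∑ i, ∑ j, (A i j + A j i) * (v j * (v j - v i)) := by
    rw [hdef, sum_comm]
    exact sum_congr rfl fun i _ => sum_congr rfl fun j _ => by ring
  rw [two_mul]
  nth_rewrite 1 [hdef]
  rw [hswap, ← sum_add_distrib]
  refine sum_congr rfl fun i _ => ?_
  rw [← sum_add_distrib]
  exact sum_congr rfl fun j _ => by ring

variable {A}

theorem eq_of_symLap_mulVec_eq_zero (hnn : ∀ i j, 0 ≤ A i j)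
    (hconn : (SimpleGraph.fromRel fun i j : Fin n => 0 < A i j + A j i).Preconnected)
    {v : Fin n → ℝ} (hv : symLap A *ᵥ v = 0) (i j : Fin n) : v i = v j := by
  have hnonneg : ∀ a b, 0 ≤ (A a b + A b a) * (v a - v b) ^ 2 := fun a b =>
    mul_nonneg (add_nonneg (hnn a b) (hnn b a)) (sq_nonneg _)
  have hzero : ∑ a, ∑ b, (A a b + A b a) * (v a - v b) ^ 2 = 0 := by
    rw [← two_mul_dotProduct_symLap_mulVec, hv, dotProduct_zero, mul_zero]
  have hadj : ∀ a b, 0 < A a b + A b a → v a = v b := by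
    intro a b hab
    have hrow_zero := (sum_eq_zero_iff_of_nonneg fun a _ => sum_nonneg fun b _ =>
      hnonneg a b).mp hzero a (mem_univ a)
    have hterm := (sum_eq_zero_iff_of_nonneg fun b _ => hnonneg a b).mp hrow_zero b (mem_univ b)
    exact sub_eq_zero.mp <| pow_eq_zero_iff two_ne_zero |>.mp <|
      (mul_eq_zero.mp hterm).resolve_left hab.ne'
  induction (SimpleGraph.reachable_iff_reflTransGen i j).mp (hconn i j) with
  | refl => rfl
  | tail _ hbc ih =>
    rcases ((SimpleGraph.fromRel_adj _ _ _).mp hbc).2 with h | h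
    · exact ih.trans (hadj _ _ h)
    · exact ih.trans (hadj _ _ h).symm

theorem symLap_apply_self_le (hnn : ∀ i j, 0 ≤ A i j) (hrow : ∀ i, ∑ j, A i j = 1) (i : Fin n) :
    symLap A i i ≤ n := by
  rw [symLap_apply_self, sum_add_distrib]
  have hout : ∑ k ∈ univ.erase i, A i k ≤ 1 :=
    hrow i ▸ sum_le_sum_of_subset_of_nonneg (erase_subset _ _) fun k _ _ => hnn i k
  have hin : ∑ k ∈ univ.erase i, A k i ≤ ∑ k ∈ univ.erase i, (1 : ℝ) :=
    sum_le_sum fun k _ => hrow k ▸ single_le_sum (fun j _ => hnn k j) (mem_univ i)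
  have hcard : ∑ k ∈ univ.erase i, (1 : ℝ) + 1 = n := by
    rw [sum_erase_add _ _ (mem_univ i)]
    simp
  linarith

/-- Gershgorin: the disc of row `k` is centred at `L k k` and has radius `L k k`. -/
theorem symLap_eigenvalue_mem_Icc (hnn : ∀ i j, 0 ≤ A i j) (hrow : ∀ i, ∑ j, A i j = 1)
    {μ : ℝ} {v : Fin n → ℝ} (hv : v ≠ 0) (hLv : symLap A *ᵥ v = μ • v) :
    μ ∈ Set.Icc 0 (2 * n : ℝ) := by
  have hμ : Module.End.HasEigenvalue (toLin' (symLap A)) μ :=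
    Module.End.hasEigenvalue_of_hasEigenvector
      ⟨Module.End.mem_eigenspace_iff.mpr (by simpa using hLv), hv⟩
  obtain ⟨k, hk⟩ := eigenvalue_mem_ball hμ
  have hradius : ∑ j ∈ univ.erase k, ‖symLap A k j‖ = symLap A k k := by
    rw [symLap_apply_self]
    refine sum_congr rfl fun j hj => ?_
    rw [symLap_apply_of_ne _ (ne_of_mem_erase hj).symm, norm_neg,
      Real.norm_of_nonneg (add_nonneg (hnn k j) (hnn j k))]
  rw [Metric.mem_closedBall, hradius, Real.dist_eq, abs_le] at hk
  have := symLap_apply_self_le hnn hrow k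
  constructor <;> linarith [hk.1, hk.2]

theorem symLap_ne_zero (hn : 0 < n) (hnn : ∀ i j, 0 ≤ A i j) (hrow : ∀ i, ∑ j, A i j = 1)
    (hdiag : ∀ i, A i i = 0) : symLap A ≠ 0 := by
  let i : Fin n := ⟨0, hn⟩
  obtain ⟨j, -, hj⟩ : ∃ j ∈ univ, (0 : ℝ) < A i j :=
    exists_lt_of_sum_lt (by simp [hrow i] : ∑ j, (0 : ℝ) < ∑ j, A i j)
  have hij : i ≠ j := fun h => by simp [h, hdiag] at hj
  intro hL
  have := congrFun (congrFun hL i) j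
  rw [symLap_apply_of_ne _ hij, Matrix.zero_apply] at this
  linarith [hnn j i]

theorem pos_of_mem_eigenvaluesOnSumZero_symLap (hnn : ∀ i j, 0 ≤ A i j)
    (hrow : ∀ i, ∑ j, A i j = 1)
    (hconn : (SimpleGraph.fromRel fun i j : Fin n => 0 < A i j + A j i).Preconnected)
    {μ : ℝ} (hμ : μ ∈ eigenvaluesOnSumZero (symLap A)) : 0 < μ := by
  obtain ⟨v, hv, hsum, hLv⟩ := hμ
  refine (symLap_eigenvalue_mem_Icc hnn hrow hv hLv).1.lt_of_ne fun h0 => hv ?_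
  have hconst := eq_of_symLap_mulVec_eq_zero hnn hconn (by rw [hLv, ← h0, zero_smul])
  funext i
  have : n • v i = 0 := by
    rw [← hsum, sum_congr rfl fun j _ => hconst j i, sum_const, card_univ, Fintype.card_fin]
  exact (smul_eq_zero.mp this).resolve_left (Fin.pos i).ne'

end symLap

theorem attraction_sub_repulsion_le_quarter {T S α γ : ℝ} (hT : T ∈ Set.Icc (0 : ℝ) 1)
    (hS : 0 ≤ S) (hα : α ≤ 1) (hγ : 0 ≤ γ) : T * (1 - T) * α - S * (1 + S) * γ ≤ 1 / 4 := by
  have hTT : 0 ≤ T * (1 - T) := mul_nonneg hT.1 (sub_nonneg.mpr hT.2)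
  have hquarter : T * (1 - T) ≤ 1 / 4 := by nlinarith [sq_nonneg (T - 1 / 2)]
  have hattr : T * (1 - T) * α ≤ T * (1 - T) := mul_le_of_le_one_right hTT hα
  have hrep : 0 ≤ S * (1 + S) * γ := by positivity
  linarith

/-- For a stochastic `A` with zero diagonal whose symmetrized graph is connected, with
`T ∈ [0,1]`, `S ≥ 0`, probabilities `α, γ`, if `T(1-T)α > S(1+S)γ` then the second smallest
eigenvalue `λ₂*` of `L` is positive and every eigenvalue of
`E = I - (2/n)(T(1-T)α - S(1+S)γ) L` restricted to `𝟙^⊥` lies in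
`[0, 1 - (2/n)(T(1-T)α - S(1+S)γ) λ₂*]`, in particular strictly below `1`. -/
theorem stmt_15 {n : ℕ} (hn : 0 < n) (A : Matrix (Fin n) (Fin n) ℝ)
    (hnn : ∀ i j, 0 ≤ A i j) (hrow : ∀ i, ∑ j, A i j = 1) (hdiag : ∀ i, A i i = 0)
    (hconn : (SimpleGraph.fromRel fun i j : Fin n => 0 < A i j + A j i).Connected)
    (T S α γ : ℝ) (hT : T ∈ Set.Icc (0 : ℝ) 1) (hS : 0 ≤ S)
    (hα : α ∈ Set.Icc (0 : ℝ) 1) (hγ : γ ∈ Set.Icc (0 : ℝ) 1)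
    (hdom : S * (1 + S) * γ < T * (1 - T) * α) :
    0 < sInf {μ : ℝ | ∃ v : Fin n → ℝ, v ≠ 0 ∧ ∑ i, v i = 0 ∧
        (symLap A).mulVec v = μ • v} ∧
    ∀ μ : ℝ,
      (∃ v : Fin n → ℝ, v ≠ 0 ∧ ∑ i, v i = 0 ∧
        ((1 : Matrix (Fin n) (Fin n) ℝ) -
            ((2 / n) * (T * (1 - T) * α - S * (1 + S) * γ)) • symLap A).mulVec v = μ • v) →
      μ ∈ Set.Icc 0
          (1 - (2 / n) * (T * (1 - T) * α - S * (1 + S) * γ) *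
            sInf {μ' : ℝ | ∃ v : Fin n → ℝ, v ≠ 0 ∧ ∑ i, v i = 0 ∧
              (symLap A).mulVec v = μ' • v}) ∧
        μ < 1 := by
  set c := (2 / n : ℝ) * (T * (1 - T) * α - S * (1 + S) * γ) with hc_def
  set Λ := eigenvaluesOnSumZero (symLap A)
  change 0 < sInf Λ ∧ ∀ μ, μ ∈ eigenvaluesOnSumZero (1 - c • symLap A) →
    μ ∈ Set.Icc 0 (1 - c * sInf Λ) ∧ μ < 1
  have hc : 0 < c := mul_pos (by positivity) (sub_pos.mpr hdom)
  have hc_le : c * (2 * n) ≤ 1 := by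
    have := attraction_sub_repulsion_le_quarter hT hS hα.2 hγ.1
    rw [hc_def]
    field_simp
    linarith
  have hpos : 0 < sInf Λ := pos_of_mem_eigenvaluesOnSumZero_symLap hnn hrow hconn.preconnected <|
    (eigenvaluesOnSumZero_nonempty (symLap_isHermitian A) (symLap_ne_zero hn hnn hrow hdiag)
      (sum_symLap_mulVec A)).csInf_mem (eigenvaluesOnSumZero_finite _)
  refine ⟨hpos, fun μ hμ => ?_⟩
  obtain ⟨lam, hlam, rfl⟩ : ∃ lam ∈ Λ, μ = 1 - c * lam :=
    ⟨_, (mem_eigenvaluesOnSumZero_one_sub_smul_iff hc.ne').mp hμ, by field_simp; ring⟩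
  have hinf : sInf Λ ≤ lam := csInf_le (eigenvaluesOnSumZero_finite _).bddBelow hlam
  obtain ⟨v, hv, -, hLv⟩ := hlam
  have hbound := (symLap_eigenvalue_mem_Icc hnn hrow hv hLv).2
  refine ⟨⟨?_, ?_⟩, ?_⟩
  · linarith [mul_le_mul_of_nonneg_left hbound hc.le]
  · linarith [mul_le_mul_of_nonneg_left hinf hc.le]
  · linarith [mul_pos hc (hpos.trans_le hinf)]
end

section
/- Let T* ∈ [0,1], S* > 0, and α, γ ≥ 0 with α + γ ≤ 1, and define D₀ = S*(1+S*)γ − T*(1−T*)α. Consider the symmetric gossip model on a weakly connected underlying graph with constant weights T_k ≡ T*, S_k ≡ S*: at each step a pair is selected, and with probability α both do the attraction update, with probability γ both do the repulsion update, otherwise nothing changes. If D₀ = 0, then the expected squared-deviation functional is conserved: 𝐄(L(k)) = L(k₀) for all k ≥ k₀, where L(k) = ∑_{i=1}^n |x_i(k) − x_ave|² and x_ave is the average of the initial states. -/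
/-- The update matrix associated with one meeting outcome of the symmetric gossip model:
`none` is the neglect event (identity update), `some ((i,j), true)` is the symmetric
attraction update with weight `T`, and `some ((i,j), false)` is the symmetric repulsion
update with weight `S`. -/
noncomputable def choiceMat {n : ℕ} (T S : ℝ) :
    Option ((Fin n × Fin n) × Bool) → Matrix (Fin n) (Fin n) ℝ
  | none => 1
  | some ((i, j), true) =>
      1 - T • Matrix.vecMulVec ((Pi.single i 1 - Pi.single j 1 : Fin n → ℝ))
        ((Pi.single i 1 - Pi.single j 1 : Fin n → ℝ))
  | some ((i, j), false) =>
      1 + S • Matrix.vecMulVec ((Pi.single i 1 - Pi.single j 1 : Fin n → ℝ))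
        ((Pi.single i 1 - Pi.single j 1 : Fin n → ℝ))

/-- The probability of one meeting outcome: pair `{i,j}` (recorded with `i < j`) is selected
and both nodes attract with probability `(α/n)(aᵢⱼ + aⱼᵢ)`, both repel with probability
`(γ/n)(aᵢⱼ + aⱼᵢ)`, and nothing changes with probability `1 - α - γ`. -/
noncomputable def choiceProb {n : ℕ} (A : Matrix (Fin n) (Fin n) ℝ) (α γ : ℝ) :
    Option ((Fin n × Fin n) × Bool) → ℝ
  | none => 1 - α - γ
  | some ((i, j), b) =>
      if i < j then ((if b then α else γ) / n) * (A i j + A j i) else 0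

private lemma vsum {n : ℕ} (i j : Fin n) (y : Fin n → ℝ) :
    ∑ m, (Pi.single i 1 - Pi.single j 1 : Fin n → ℝ) m * y m = y i - y j := by
  simp [Pi.single_apply, sub_mul, ite_mul, Finset.sum_sub_distrib]

private lemma vsq {n : ℕ} {i j : Fin n} (hij : i ≠ j) :
    ∑ m, ((Pi.single i 1 - Pi.single j 1 : Fin n → ℝ) m)^2 = 2 := by
  simp [Pi.single_apply, sub_sq, ite_mul, mul_ite, Finset.sum_sub_distrib,
    Finset.sum_add_distrib, hij, Ne.symm hij]
  norm_num

private lemma mulVec_pert {n : ℕ} (c : ℝ) (i j : Fin n) (y : Fin n → ℝ) (l : Fin n) :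
    ((1 + c • Matrix.vecMulVec (Pi.single i 1 - Pi.single j 1 : Fin n → ℝ)
      (Pi.single i 1 - Pi.single j 1)).mulVec y) l
      = y l + c * (Pi.single i 1 - Pi.single j 1 : Fin n → ℝ) l * (y i - y j) := by
  simp only [Matrix.add_mulVec, Matrix.one_mulVec, Matrix.smul_mulVec,
    Pi.add_apply, Pi.smul_apply, smul_eq_mul]
  rw [show (Matrix.vecMulVec (Pi.single i 1 - Pi.single j 1 : Fin n → ℝ)
      (Pi.single i 1 - Pi.single j 1)).mulVec y l
      = (Pi.single i 1 - Pi.single j 1 : Fin n → ℝ) l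
        * ∑ m, (Pi.single i 1 - Pi.single j 1 : Fin n → ℝ) m * y m by
    simp [Matrix.vecMulVec, Matrix.mulVec, dotProduct, Finset.mul_sum, mul_assoc],
    vsum]
  ring

private lemma key {n : ℕ} (c : ℝ) {i j : Fin n} (hij : i ≠ j) (y : Fin n → ℝ) :
    ∑ l, (((1 + c • Matrix.vecMulVec (Pi.single i 1 - Pi.single j 1 : Fin n → ℝ)
      (Pi.single i 1 - Pi.single j 1)).mulVec y) l)^2
      = ∑ l, (y l)^2 + (2*c + 2*c^2) * (y i - y j)^2 := by
  simp only [mulVec_pert]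
  have expand : ∀ l, (y l + c * (Pi.single i 1 - Pi.single j 1 : Fin n → ℝ) l * (y i - y j))^2
      = (y l)^2 + (2*c*(y i - y j)) * ((Pi.single i 1 - Pi.single j 1 : Fin n → ℝ) l * y l)
        + (c^2*(y i - y j)^2) * ((Pi.single i 1 - Pi.single j 1 : Fin n → ℝ) l)^2 := by
    intro l; ring
  simp only [expand]
  rw [Finset.sum_add_distrib, Finset.sum_add_distrib, ← Finset.mul_sum, ← Finset.mul_sum,
    vsum, vsq hij]
  ring

private lemma sumA {n : ℕ} (A : Matrix (Fin n) (Fin n) ℝ)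
    (hrow : ∀ i, ∑ j, A i j = 1) (hdiag : ∀ i, A i i = 0) :
    ∑ i, ∑ j, (if i < j then A i j + A j i else 0) = n := by
  have h2 : ∑ i, ∑ j, (if i < j then A j i else 0)
      = ∑ i, ∑ j, (if j < i then A i j else 0) := by rw [Finset.sum_comm]
  calc ∑ i, ∑ j, (if i < j then A i j + A j i else 0)
      = ∑ i, ∑ j, ((if i < j then A i j else 0) + (if i < j then A j i else 0)) := by
        refine Finset.sum_congr rfl fun i _ => Finset.sum_congr rfl fun j _ => ?_
        by_cases h : i < j <;> simp [h]
    _ = ∑ i, ∑ j, (if i < j then A i j else 0) + ∑ i, ∑ j, (if i < j then A j i else 0) := by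
        simp [Finset.sum_add_distrib]
    _ = ∑ i, ∑ j, ((if i < j then A i j else 0) + (if j < i then A i j else 0)) := by
        rw [h2]; simp [Finset.sum_add_distrib]
    _ = ∑ i, ∑ j, (if i = j then 0 else A i j) := by
        refine Finset.sum_congr rfl fun i _ => Finset.sum_congr rfl fun j _ => ?_
        rcases lt_trichotomy i j with h | h | h
        · simp [h, not_lt.2 h.le, h.ne]
        · simp [h, lt_irrefl]
        · simp [h, not_lt.2 h.le, h.ne', (h.ne).symm]
    _ = ∑ i : Fin n, (1 : ℝ) := by
        refine Finset.sum_congr rfl fun i _ => ?_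
        rw [← hrow i]
        refine Finset.sum_congr rfl fun j _ => ?_
        by_cases h : i = j
        · subst h; simp [hdiag]
        · simp [h]
    _ = n := by simp

private lemma step0 {n : ℕ} (hn : 0 < n) (A : Matrix (Fin n) (Fin n) ℝ)
    (hrow : ∀ i, ∑ j, A i j = 1) (hdiag : ∀ i, A i i = 0)
    (T S α γ : ℝ) (hD0 : S * (1 + S) * γ - T * (1 - T) * α = 0)
    (y : Fin n → ℝ) :
    ∑ o : Option ((Fin n × Fin n) × Bool),
      choiceProb A α γ o * ∑ l, ((choiceMat T S o).mulVec y l)^2 = ∑ l, (y l)^2 := by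
  have hn' : (n : ℝ) ≠ 0 := Nat.cast_ne_zero.2 hn.ne'
  rw [Fintype.sum_option]
  have h1 : choiceProb A α γ none * ∑ l, ((choiceMat (n := n) T S none).mulVec y l)^2
      = (1 - α - γ) * ∑ l, (y l)^2 := by
    simp [choiceProb, choiceMat]
  rw [h1, Fintype.sum_prod_type, Fintype.sum_prod_type]
  simp only [Fintype.sum_bool]
  have hinner : ∀ i j : Fin n,
      choiceProb A α γ (some ((i, j), true)) *
          ∑ l, ((choiceMat T S (some ((i, j), true))).mulVec y l)^2
        + choiceProb A α γ (some ((i, j), false)) *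
          ∑ l, ((choiceMat T S (some ((i, j), false))).mulVec y l)^2
      = (if i < j then A i j + A j i else 0) * (((α + γ)/n) * ∑ l, (y l)^2) := by
    intro i j
    by_cases h : i < j
    · have hij : i ≠ j := h.ne
      have hAtt : ∑ l, ((choiceMat T S (some ((i, j), true))).mulVec y l)^2
          = ∑ l, (y l)^2 + (2*(-T) + 2*(-T)^2) * (y i - y j)^2 := by
        have hk := key (-T) hij y
        rw [neg_smul, ← sub_eq_add_neg] at hk
        simpa [choiceMat] using hk
      have hRep : ∑ l, ((choiceMat T S (some ((i, j), false))).mulVec y l)^2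
          = ∑ l, (y l)^2 + (2*S + 2*S^2) * (y i - y j)^2 := by
        have hk := key S hij y
        simpa [choiceMat] using hk
      rw [hAtt, hRep]
      simp only [choiceProb, if_pos h, Bool.false_eq_true, if_true, if_false]
      linear_combination ((A i j + A j i)/n*(y i - y j)^2*2) * hD0
    · simp [choiceProb, h]
  simp only [hinner]
  rw [show ∑ i, ∑ j, (if i < j then A i j + A j i else 0) * (((α + γ)/n) * ∑ l, (y l)^2)
      = (∑ i, ∑ j, (if i < j then A i j + A j i else 0)) * (((α + γ)/n) * ∑ l, (y l)^2) by
    rw [Finset.sum_mul]; exact Finset.sum_congr rfl fun i _ => (Finset.sum_mul _ _ _).symm]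
  rw [sumA A hrow hdiag]
  field_simp
  ring

private lemma choiceMat_const {n : ℕ} (T S : ℝ) (o : Option ((Fin n × Fin n) × Bool))
    (c : ℝ) : (choiceMat T S o).mulVec (fun _ => c) = fun _ => c := by
  match o with
  | none => simp [choiceMat]
  | some ((i, j), true) =>
    funext l
    have h : choiceMat (n := n) T S (some ((i, j), true))
        = 1 + (-T) • Matrix.vecMulVec (Pi.single i 1 - Pi.single j 1 : Fin n → ℝ)
          (Pi.single i 1 - Pi.single j 1) := by
      simp [choiceMat, neg_smul, sub_eq_add_neg]
    rw [h, mulVec_pert]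
    ring
  | some ((i, j), false) =>
    funext l
    rw [show choiceMat (n := n) T S (some ((i, j), false))
        = 1 + S • Matrix.vecMulVec (Pi.single i 1 - Pi.single j 1 : Fin n → ℝ)
          (Pi.single i 1 - Pi.single j 1) from rfl, mulVec_pert]
    ring

private lemma step1 {n : ℕ} (hn : 0 < n) (A : Matrix (Fin n) (Fin n) ℝ)
    (hrow : ∀ i, ∑ j, A i j = 1) (hdiag : ∀ i, A i i = 0)
    (T S α γ : ℝ) (hD0 : S * (1 + S) * γ - T * (1 - T) * α = 0)
    (x : Fin n → ℝ) (c : ℝ) :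
    ∑ o : Option ((Fin n × Fin n) × Bool),
      choiceProb A α γ o * ∑ l, ((choiceMat T S o).mulVec x l - c)^2
      = ∑ l, (x l - c)^2 := by
  have h : ∀ o : Option ((Fin n × Fin n) × Bool), ∀ l,
      (choiceMat T S o).mulVec x l - c = (choiceMat T S o).mulVec (fun m => x m - c) l := by
    intro o l
    rw [show (fun m => x m - c) = x - (fun _ => c) from rfl, Matrix.mulVec_sub,
      choiceMat_const]
    simp
  simp only [h]
  exact step0 hn A hrow hdiag T S α γ hD0 (fun m => x m - c)

/-- Theorem 3(iii): in the symmetric gossip model with constant weights `T* ∈ [0,1]`,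
`S* > 0`, attraction probability `α` and repulsion probability `γ`, on a weakly connected
underlying graph, if `D₀ = S*(1+S*)γ - T*(1-T*)α = 0` then the expected squared-deviation
functional `𝐄(L(k)) = 𝐄 ∑ᵢ (xᵢ(k) - x_ave)²` is conserved: it equals `L(k₀)` for all `k`. -/
theorem stmt_19 {n : ℕ} (hn : 0 < n) (A : Matrix (Fin n) (Fin n) ℝ)
    (hnn : ∀ i j, 0 ≤ A i j) (hrow : ∀ i, ∑ j, A i j = 1) (hdiag : ∀ i, A i i = 0)
    (hconn : (SimpleGraph.fromRel fun i j : Fin n => 0 < A i j + A j i).Connected)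
    (Tstar Sstar α γ : ℝ) (hT : Tstar ∈ Set.Icc (0 : ℝ) 1) (hS : 0 < Sstar)
    (hα : 0 ≤ α) (hγ : 0 ≤ γ) (hαγ : α + γ ≤ 1)
    (hD0 : Sstar * (1 + Sstar) * γ - Tstar * (1 - Tstar) * α = 0)
    (x0 : Fin n → ℝ) (k : ℕ) :
    ∑ ω : Fin k → Option ((Fin n × Fin n) × Bool),
        (∏ t, choiceProb A α γ (ω t)) *
          ∑ i, (((List.ofFn fun t => choiceMat Tstar Sstar (ω t)).prod.mulVec x0) i -
              (∑ j, x0 j) / n) ^ 2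
      = ∑ i, (x0 i - (∑ j, x0 j) / n) ^ 2 := by
  set c : ℝ := (∑ j, x0 j) / n with hc
  induction k with
  | zero =>
    simp [Matrix.one_mulVec]
  | succ k ih =>
    set F : Fin (k+1) → Type := fun _ => Option ((Fin n × Fin n) × Bool) with hF
    rw [← Equiv.sum_comp (Fin.consEquiv F)]
    rw [Fintype.sum_prod_type]
    have hterm : ∀ (a : Option ((Fin n × Fin n) × Bool))
        (ρ : Fin k → Option ((Fin n × Fin n) × Bool)),
        (∏ t, choiceProb A α γ ((Fin.consEquiv F (a, ρ)) t)) *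
          ∑ i, (((List.ofFn fun t => choiceMat Tstar Sstar ((Fin.consEquiv F (a, ρ)) t)).prod.mulVec x0) i - c) ^ 2
        = ((∏ t, choiceProb A α γ (ρ t)) * choiceProb A α γ a) *
          ∑ i, ((choiceMat Tstar Sstar a).mulVec
            ((List.ofFn fun t => choiceMat Tstar Sstar (ρ t)).prod.mulVec x0) i - c) ^ 2 := by
      intro a ρ
      have h1 : (∏ t, choiceProb A α γ ((Fin.consEquiv F (a, ρ)) t))
          = choiceProb A α γ a * ∏ t, choiceProb A α γ (ρ t) := by
        simp [Fin.consEquiv, Fin.prod_univ_succ]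
      have h2 : (List.ofFn fun t => choiceMat Tstar Sstar ((Fin.consEquiv F (a, ρ)) t)).prod
          = choiceMat Tstar Sstar a * (List.ofFn fun t => choiceMat Tstar Sstar (ρ t)).prod := by
        rw [List.ofFn_succ]
        simp [Fin.consEquiv]
      rw [h1, h2, ← Matrix.mulVec_mulVec]
      ring
    simp only [hterm]
    rw [Finset.sum_comm]
    calc ∑ ρ : Fin k → Option ((Fin n × Fin n) × Bool), ∑ a,
          ((∏ t, choiceProb A α γ (ρ t)) * choiceProb A α γ a) *
          ∑ i, ((choiceMat Tstar Sstar a).mulVec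
            ((List.ofFn fun t => choiceMat Tstar Sstar (ρ t)).prod.mulVec x0) i - c) ^ 2
        = ∑ ρ : Fin k → Option ((Fin n × Fin n) × Bool),
            (∏ t, choiceProb A α γ (ρ t)) *
            ∑ i, (((List.ofFn fun t => choiceMat Tstar Sstar (ρ t)).prod.mulVec x0) i - c) ^ 2 := by
          refine Finset.sum_congr rfl fun ρ _ => ?_
          rw [show ∀ z : Fin n → ℝ, ∑ a : Option ((Fin n × Fin n) × Bool),
              ((∏ t, choiceProb A α γ (ρ t)) * choiceProb A α γ a) *
                ∑ i, ((choiceMat Tstar Sstar a).mulVec z i - c) ^ 2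
              = (∏ t, choiceProb A α γ (ρ t)) *
                ∑ a : Option ((Fin n × Fin n) × Bool), choiceProb A α γ a *
                  ∑ i, ((choiceMat Tstar Sstar a).mulVec z i - c) ^ 2 by
            intro z; rw [Finset.mul_sum]; exact Finset.sum_congr rfl fun a _ => by ring]
          rw [step1 hn A hrow hdiag Tstar Sstar α γ hD0 _ c]
      _ = ∑ i, (x0 i - c) ^ 2 := ih
end
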